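/- There is no alternative O-bimodule structure on the conjugate regular left O-module O̅. That is, there exists no R-bilinear right multiplication R : O̅ × O → O̅ with x·1 = x making O̅ (with left action p·̂x := p̄x) into an alternative bimodule, i.e., satisfying [p,q,x] = [q,x,p] = [x,p,q] for all p,q ∈ O and x ∈ O̅, where the associators use the left action p·̂x = p̄x. -/

import Mathlib

noncomputable section

open scoped Quaternion

/-- The octonions, built from pairs of quaternions via the Cayley–Dickson construction. -/
def Octonion : Type := ℍ[ℝ] × ℍ[ℝ]

namespace Octonion

def mk' (a b : ℍ[ℝ]) : Octonion := Prod.mk a b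
def q1 (x : Octonion) : ℍ[ℝ] := Prod.fst x
def q2 (x : Octonion) : ℍ[ℝ] := Prod.snd x

instance : AddCommGroup Octonion := inferInstanceAs (AddCommGroup (ℍ[ℝ] × ℍ[ℝ]))
instance : Module ℝ Octonion := inferInstanceAs (Module ℝ (ℍ[ℝ] × ℍ[ℝ]))
instance : One Octonion := ⟨mk' 1 0⟩
instance : Mul Octonion :=
  ⟨fun x y => mk' (q1 x * q1 y - star (q2 y) * q2 x) (q2 y * q1 x + q2 x * star (q1 y))⟩

/-- Octonion conjugation. -/
def conj (x : Octonion) : Octonion := mk' (star (q1 x)) (-(q2 x))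

/-- The real part of an octonion. -/
def re (x : Octonion) : ℝ := (q1 x).re

/-- The standard basis `e 0 = 1, e 1, …, e 7` of the octonions. -/
def e : Fin 8 → Octonion :=
  ![mk' 1 0, mk' ⟨0,1,0,0⟩ 0, mk' ⟨0,0,1,0⟩ 0, mk' ⟨0,0,0,1⟩ 0,
    mk' 0 1, mk' 0 ⟨0,1,0,0⟩, mk' 0 ⟨0,0,1,0⟩, mk' 0 ⟨0,0,0,1⟩]

/-- The coordinates of an octonion with respect to the standard basis. -/
def coord (x : Octonion) : Fin 8 → ℝ :=
  ![(q1 x).re, (q1 x).imI, (q1 x).imJ, (q1 x).imK,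
    (q2 x).re, (q2 x).imI, (q2 x).imJ, (q2 x).imK]

end Octonion

/-! Fix `p` and put `w = p̄`. Since conjugation reverses products, the identity `[p,q,x] = [q,x,p]`
with `q = c̄` reads `(c w) x - w (c x) = R (c x) p - c R x p`. Together with the linearized right
alternative law this says that `S y := R y p + (w y + y w)` commutes with left multiplications, so
`S y = y s` with `s = S 1` in the right nucleus of `𝕆`, which is `ℝ`; hence
`R y p = σ y - (w y + y w)` for some real `σ`. For `p = e₁` and `y = e₂`, which anticommute, this
gives `e₂ · e₁ = σ e₂`. On the other hand `[e₁,e₁,e₂] = 0` by left alternativity, so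
`[e₂,e₁,e₁] = 0` forces `(e₂ · e₁) · e₁ = e₂ · (e₁ e₁) = -e₂`, that is `σ² = -1`. -/

namespace Octonion

@[ext] lemma ext {x y : Octonion} (h₁ : q1 x = q1 y) (h₂ : q2 x = q2 y) : x = y :=
  Prod.ext h₁ h₂

@[simp] lemma q1_mk' (a b : ℍ[ℝ]) : q1 (mk' a b) = a := rfl
@[simp] lemma q2_mk' (a b : ℍ[ℝ]) : q2 (mk' a b) = b := rfl
@[simp] lemma q1_zero : q1 (0 : Octonion) = 0 := rfl
@[simp] lemma q2_zero : q2 (0 : Octonion) = 0 := rfl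
@[simp] lemma q1_one : q1 (1 : Octonion) = 1 := rfl
@[simp] lemma q2_one : q2 (1 : Octonion) = 0 := rfl
@[simp] lemma q1_add (x y : Octonion) : q1 (x + y) = q1 x + q1 y := rfl
@[simp] lemma q2_add (x y : Octonion) : q2 (x + y) = q2 x + q2 y := rfl
@[simp] lemma q1_neg (x : Octonion) : q1 (-x) = -q1 x := rfl
@[simp] lemma q2_neg (x : Octonion) : q2 (-x) = -q2 x := rfl
@[simp] lemma q1_sub (x y : Octonion) : q1 (x - y) = q1 x - q1 y := rfl
@[simp] lemma q2_sub (x y : Octonion) : q2 (x - y) = q2 x - q2 y := rfl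
@[simp] lemma q1_smul (r : ℝ) (x : Octonion) : q1 (r • x) = r • q1 x := rfl
@[simp] lemma q2_smul (r : ℝ) (x : Octonion) : q2 (r • x) = r • q2 x := rfl
@[simp] lemma q1_mul (x y : Octonion) : q1 (x * y) = q1 x * q1 y - star (q2 y) * q2 x := rfl
@[simp] lemma q2_mul (x y : Octonion) : q2 (x * y) = q2 y * q1 x + q2 x * star (q1 y) := rfl
@[simp] lemma q1_conj (x : Octonion) : q1 (conj x) = star (q1 x) := rfl
@[simp] lemma q2_conj (x : Octonion) : q2 (conj x) = -q2 x := rfl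

lemma e_one_coords : q2 (e 1) = 0 ∧ (q1 (e 1)).re = 0 ∧ (q1 (e 1)).imI = 1 ∧
    (q1 (e 1)).imJ = 0 ∧ (q1 (e 1)).imK = 0 := ⟨rfl, rfl, rfl, rfl, rfl⟩
lemma e_two_coords : q2 (e 2) = 0 ∧ (q1 (e 2)).re = 0 ∧ (q1 (e 2)).imI = 0 ∧
    (q1 (e 2)).imJ = 1 ∧ (q1 (e 2)).imK = 0 := ⟨rfl, rfl, rfl, rfl, rfl⟩
lemma e_four_coords : q1 (e 4) = 0 ∧ q2 (e 4) = 1 := ⟨rfl, rfl⟩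

instance : SMulCommClass ℝ Octonion Octonion :=
  ⟨fun r x y => by ext1 <;> simp [smul_sub, smul_add]⟩

@[simp] lemma conj_conj (x : Octonion) : conj (conj x) = x := by
  ext <;> simp

lemma conj_mul (x y : Octonion) : conj (x * y) = conj y * conj x := by
  ext <;> simp [sub_eq_add_neg, add_comm]

lemma mul_self_mul (x y : Octonion) : x * x * y = x * (x * y) := by
  ext <;> simp <;> ring

lemma mul_mul_self (x y : Octonion) : x * y * y = x * (y * y) := by
  ext <;> simp <;> ring

lemma e_one_mul_e_one : e 1 * e 1 = -1 := by
  ext <;> simp [e_one_coords]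

lemma conj_e_one_mul_e_two_add_e_two_mul_conj_e_one :
    conj (e 1) * e 2 + e 2 * conj (e 1) = 0 := by
  ext <;> simp [e_one_coords, e_two_coords]

lemma e_two_ne_zero : e 2 ≠ 0 := fun h => by
  simpa [e_two_coords] using congrArg (fun z => (q1 z).imJ) h

lemma eq_re_smul_one_of_forall_mul_assoc {s : Octonion}
    (h : ∀ c x : Octonion, c * x * s = c * (x * s)) : s = re s • 1 := by
  have h₁₂ := h (e 1) (e 2)
  have h₁₄ := h (e 1) (e 4)
  have h₂₄ := h (e 2) (e 4)
  simp only [Octonion.ext_iff, Quaternion.ext_iff] at h₁₂ h₁₄ h₂₄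
  simp [e_one_coords, e_two_coords, e_four_coords] at h₁₂ h₁₄ h₂₄
  ext <;> simp [re] <;> linarith

-- Kept local: as a global instance it would become the preferred source of `+`, `-` and `0`
-- on `Octonion`, so that statements about octonions would elaborate to different terms.
abbrev nonAssocRing : NonAssocRing Octonion :=
  { (inferInstance : AddCommGroup Octonion), (inferInstance : Mul Octonion),
    (inferInstance : One Octonion) with
    left_distrib := fun a b c => by ext <;> simp [mul_add, add_mul] <;> abel
    right_distrib := fun a b c => by ext <;> simp [mul_add, add_mul] <;> abel
    zero_mul := fun a => by ext <;> simp
    mul_zero := fun a => by ext <;> simp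
    one_mul := fun a => by ext <;> simp
    mul_one := fun a => by ext <;> simp }

section

attribute [local instance] nonAssocRing

lemma associator_add_associator_swap (x y z : Octonion) :
    associator x y z + associator x z y = 0 := by
  calc associator x y z + associator x z y
      = associator x (y + z) (y + z) - associator x y y - associator x z z := by
        simp only [associator_apply, mul_add, add_mul]
        abel
    _ = 0 := by simp only [associator_apply, mul_mul_self, sub_self]

lemma exists_apply_eq_smul_sub_of_left_eq_middle_associator
    {R : Octonion →ₗ[ℝ] Octonion →ₗ[ℝ] Octonion}
    (hR : ∀ p q x : Octonion,
      conj (p * q) * x - conj p * (conj q * x) = R (conj q * x) p - conj q * R x p)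
    (p : Octonion) :
    ∃ σ : ℝ, ∀ y, R y p = σ • y - (conj p * y + y * conj p) := by
  set w := conj p
  set S : Octonion → Octonion := fun y => R y p + (w * y + y * w) with hS_def
  have hS : ∀ c x, S (c * x) = c * S x := by
    intro c x
    have h := hR p (conj c) x
    rw [conj_mul, conj_conj] at h
    have hR' : R (c * x) p = c * R x p + (c * w * x - w * (c * x)) := by rw [h]; abel
    rw [← sub_eq_zero, ← associator_add_associator_swap c x w]
    simp only [hS_def, hR', associator_apply, mul_add]
    abel
  have hS_mul : ∀ y, S y = y * S 1 := fun y => by simpa using hS y 1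
  obtain ⟨σ, hσ⟩ : ∃ σ : ℝ, S 1 = σ • 1 :=
    ⟨_, eq_re_smul_one_of_forall_mul_assoc fun c x => by rw [← hS_mul, hS, hS_mul]⟩
  refine ⟨σ, fun y => ?_⟩
  have hy : R y p = S y - (w * y + y * w) := by simp [hS_def]
  rw [hy, hS_mul, hσ, mul_smul_comm, mul_one]

end

end Octonion

open Octonion in
/-- The conjugate regular left `𝕆`-module `𝕆̄` (left action `p ·̂ x = p̄ x`) admits
no alternative `𝕆`-bimodule structure: there is no `ℝ`-bilinear right action `R`
(`R x p = x · p`) with `x · 1 = x` making the left, middle and right associators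
totally alternating. -/
theorem conjugate_regular_module_admits_no_bimodule_structure :
    ¬ ∃ R : Octonion →ₗ[ℝ] Octonion →ₗ[ℝ] Octonion,
        (∀ x : Octonion, R x 1 = x) ∧
        (∀ p q x : Octonion,
          conj (p * q) * x - conj p * (conj q * x)
            = R (conj q * x) p - conj q * R x p) ∧
        (∀ p q x : Octonion,
          R (conj q * x) p - conj q * R x p
            = R (R x p) q - R x (p * q)) := by
  rintro ⟨R, hunit, hLM, hMR⟩
  obtain ⟨σ, hσ⟩ := exists_apply_eq_smul_sub_of_left_eq_middle_associator hLM (e 1)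
  have h₁ : R (e 2) (e 1) = σ • e 2 := by
    rw [hσ, conj_e_one_mul_e_two_add_e_two_mul_conj_e_one, sub_zero]
  have h₂ : R (R (e 2) (e 1)) (e 1) = -e 2 := by
    have h := (hLM (e 1) (e 1) (e 2)).trans (hMR (e 1) (e 1) (e 2))
    rwa [conj_mul, mul_self_mul, sub_self, e_one_mul_e_one, map_neg, hunit, eq_comm,
      sub_eq_zero] at h
  rw [h₁, map_smul, LinearMap.smul_apply, h₁, smul_smul] at h₂
  have h₃ : (σ * σ + 1) • e 2 = 0 := by rw [add_smul, h₂, one_smul, neg_add_cancel]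
  exact (smul_eq_zero.mp h₃).elim (add_pos_of_nonneg_of_pos (mul_self_nonneg σ) one_pos).ne'
    e_two_ne_zero
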